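/- arXiv:1304.1755 — 6 statements merged into one kernel-verified Lean document; each statement's English description precedes it below -/
import Mathlib

section
/- Let n₁, n₂ be positive integers. Let Â be a symmetric positive definite real n₁×n₁ matrix, D a symmetric positive definite real n₂×n₂ matrix, and W a real n₂×n₁ matrix. Define the Schur complement S = D - W Â⁻¹ Wᵀ and assume S is symmetric positive definite. Then every eigenvalue μ of the generalized eigenvalue problem S z = μ D z (i.e., every μ ∈ ℝ for which there exists z ≠ 0 with S z = μ D z) satisfies 0 < μ ≤ 1. -/
open Matrix

/-!
Taking the inner product of `S z = μ D z` with `z` gives `zᵀ S z = μ zᵀ D z`. Since `Â⁻¹` is positive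
definite, `D - S = W Â⁻¹ Wᵀ` is positive semidefinite, so `0 < zᵀ S z ≤ zᵀ D z`, which pins the
Rayleigh quotient `μ = zᵀ S z / zᵀ D z` to `(0, 1]`.
-/

lemma pos_and_le_one_of_eq_mul {s d μ : ℝ} (hs : 0 < s) (hsd : s ≤ d) (h : s = μ * d) :
    0 < μ ∧ μ ≤ 1 := by
  have hd : 0 < d := hs.trans_le hsd
  constructor
  · exact pos_of_mul_pos_left (h ▸ hs) hd.le
  · nlinarith

namespace Matrix

variable {m n : Type*} [Fintype m] [Fintype n] [DecidableEq n]

lemma PosDef.mul_inv_mul_transpose_posSemidef {A : Matrix n n ℝ} (hA : A.PosDef)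
    (W : Matrix m n ℝ) : (W * A⁻¹ * Wᵀ).PosSemidef := by
  simpa using hA.inv.posSemidef.mul_mul_conjTranspose_same W

lemma generalized_eigenvalue_pos_and_le_one {S D : Matrix m m ℝ} (hS : S.PosDef)
    (hDS : (D - S).PosSemidef) {μ : ℝ} {z : m → ℝ} (hz : z ≠ 0)
    (heig : S *ᵥ z = μ • (D *ᵥ z)) : 0 < μ ∧ μ ≤ 1 := by
  have hSz : 0 < z ⬝ᵥ (S *ᵥ z) := by simpa using hS.dotProduct_mulVec_pos hz
  have hSD : z ⬝ᵥ (S *ᵥ z) ≤ z ⬝ᵥ (D *ᵥ z) := by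
    have := hDS.dotProduct_mulVec_nonneg z
    simp only [star_trivial, sub_mulVec, dotProduct_sub] at this
    linarith
  refine pos_and_le_one_of_eq_mul hSz hSD ?_
  rw [heig, dotProduct_smul, smul_eq_mul]

end Matrix

theorem schur_generalized_eigenvalue_bounds_general
    (n₁ n₂ : ℕ)
    (Ahat : Matrix (Fin n₁) (Fin n₁) ℝ) (hA : Ahat.PosDef)
    (D : Matrix (Fin n₂) (Fin n₂) ℝ)
    (W : Matrix (Fin n₂) (Fin n₁) ℝ)
    (S : Matrix (Fin n₂) (Fin n₂) ℝ) (hS : S = D - W * Ahat⁻¹ * Wᵀ)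
    (hSpd : S.PosDef)
    (μ : ℝ) (z : Fin n₂ → ℝ) (hz : z ≠ 0)
    (heig : S *ᵥ z = μ • (D *ᵥ z)) :
    0 < μ ∧ μ ≤ 1 := by
  have hDS : D - S = W * Ahat⁻¹ * Wᵀ := by rw [hS, sub_sub_cancel]
  exact generalized_eigenvalue_pos_and_le_one hSpd (hDS ▸ hA.mul_inv_mul_transpose_posSemidef W) hz heig

/-- Every eigenvalue `μ` of the generalized eigenvalue problem `S z = μ D z`,
where `S = D - W Ahat⁻¹ Wᵀ` is the Schur complement and `Ahat`, `D`, `S` are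
symmetric positive definite, satisfies `0 < μ ≤ 1`. -/
theorem schur_generalized_eigenvalue_bounds
    (n₁ n₂ : ℕ) (hn₁ : 0 < n₁) (hn₂ : 0 < n₂)
    (Ahat : Matrix (Fin n₁) (Fin n₁) ℝ) (hA : Ahat.PosDef)
    (D : Matrix (Fin n₂) (Fin n₂) ℝ) (hD : D.PosDef)
    (W : Matrix (Fin n₂) (Fin n₁) ℝ)
    (S : Matrix (Fin n₂) (Fin n₂) ℝ) (hS : S = D - W * Ahat⁻¹ * Wᵀ)
    (hSpd : S.PosDef)
    (μ : ℝ) (z : Fin n₂ → ℝ) (hz : z ≠ 0)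
    (heig : S *ᵥ z = μ • (D *ᵥ z)) :
    0 < μ ∧ μ ≤ 1 :=
  schur_generalized_eigenvalue_bounds_general n₁ n₂ Ahat hA D W S hS hSpd μ z hz heig
end

section
/- Let n₁, n₂ be positive integers, Â a symmetric positive definite real n₁×n₁ matrix, D a symmetric positive definite real n₂×n₂ matrix, and W a real n₂×n₁ matrix. Form the block matrices A = [[Â, Wᵀ],[W, D]] and B_T = [[Â, 0],[W, D]], and assume A is positive definite. Then every complex eigenvalue μ of B_T⁻¹ A is a real number satisfying 0 < μ ≤ 1. -/
/-!
Let `x = (u, v) ≠ 0` satisfy `A x = μ B_T x` with `μ ≠ 1`. The second block row then reads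
`(1 - μ) (W u + D v) = 0`, so `W u + D v = 0`. Hence `x* A x = μ x* B_T x = μ (u* Â u)`, while
`u* Wᵀ v = conj (v* W u) = -(v* D v)` gives `x* A x = u* Â u - v* D v`. Since `x* A x > 0` and
`v* D v ≥ 0`, `μ = (u* Â u - v* D v) / (u* Â u)` is real and lies in `(0, 1]`.
-/

open Matrix

open scoped ComplexOrder MatrixOrder

theorem Complex.im_eq_zero_and_re_mem_Ioc_of_mul_eq_sub {μ a d : ℂ} (hd : 0 ≤ d)
    (hpos : 0 < a - d) (h : μ * a = a - d) : μ.im = 0 ∧ 0 < μ.re ∧ μ.re ≤ 1 := by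
  obtain ⟨d, rfl⟩ : ∃ r : ℝ, (r : ℂ) = d :=
    ⟨d.re, (Complex.eq_re_of_ofReal_le (r := 0) (by rwa [Complex.ofReal_zero])).symm⟩
  obtain ⟨s, hs⟩ : ∃ r : ℝ, (r : ℂ) = a - d :=
    ⟨_, (Complex.eq_re_of_ofReal_le (r := 0) (by rw [Complex.ofReal_zero]; exact hpos.le)).symm⟩
  rw [Complex.zero_le_real] at hd
  rw [← hs, Complex.zero_lt_real] at hpos
  obtain rfl : a = ((s + d : ℝ) : ℂ) := by rw [Complex.ofReal_add, hs]; ring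
  have hsd : 0 < s + d := by linarith
  obtain rfl : μ = ((s / (s + d) : ℝ) : ℂ) := by
    have hne : ((s + d : ℝ) : ℂ) ≠ 0 := by exact_mod_cast hsd.ne'
    rw [Complex.ofReal_div, eq_div_iff hne, h, ← hs]
  simp only [Complex.ofReal_im, Complex.ofReal_re, true_and]
  exact ⟨div_pos hpos hsd, (div_le_one hsd).mpr (by linarith)⟩

namespace Matrix

variable {m n : Type*}

theorem conjTranspose_map_ofReal (M : Matrix m n ℝ) :
    (M.map Complex.ofReal)ᴴ = Mᵀ.map Complex.ofReal := by
  rw [← conjTranspose_eq_transpose_of_trivial,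
    conjTranspose_map _ fun r => (Complex.conj_ofReal r).symm]

theorem PosSemidef.map_ofReal [Fintype n] {M : Matrix n n ℝ} (hM : M.PosSemidef) :
    (M.map Complex.ofReal).PosSemidef := by
  classical
  obtain ⟨B, rfl⟩ := CStarAlgebra.nonneg_iff_eq_star_mul_self.mp hM.nonneg
  have hmap : (Bᵀ * B).map Complex.ofReal = (B.map Complex.ofReal)ᴴ * B.map Complex.ofReal := by
    rw [conjTranspose_map_ofReal]
    exact Matrix.map_mul (f := Complex.ofRealHom)
  rw [star_eq_conjTranspose, conjTranspose_eq_transpose_of_trivial, hmap]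
  exact posSemidef_conjTranspose_mul_self _

theorem PosDef.map_ofReal [Fintype n] {M : Matrix n n ℝ} (hM : M.PosDef) :
    (M.map Complex.ofReal).PosDef := by
  classical
  rw [hM.posSemidef.map_ofReal.posDef_iff_det_ne_zero]
  change (Complex.ofRealHom.mapMatrix M).det ≠ 0
  rw [← Complex.ofRealHom.map_det]
  exact Complex.ofReal_ne_zero.mpr hM.det_pos.ne'

theorem sumElim_dotProduct_fromBlocks_mulVec {l o α : Type*} [Fintype l] [Fintype o] [Fintype m]
    [Fintype n] [NonUnitalNonAssocSemiring α] (P : Matrix m l α) (Q : Matrix m o α)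
    (R : Matrix n l α) (S : Matrix n o α) (a : m → α) (b : n → α) (u : l → α) (v : o → α) :
    Sum.elim a b ⬝ᵥ (fromBlocks P Q R S *ᵥ Sum.elim u v) =
      a ⬝ᵥ (P *ᵥ u + Q *ᵥ v) + b ⬝ᵥ (R *ᵥ u + S *ᵥ v) := by
  rw [fromBlocks_mulVec, Sum.elim_comp_inl, Sum.elim_comp_inr, sumElim_dotProduct_sumElim]

theorem exists_mulVec_eq_smul_mulVec_of_mem_spectrum_map_inv_mul {R K : Type*} [CommRing R]
    [Field K] [Fintype n] [DecidableEq n] (f : R →+* K) {A B : Matrix n n R} (hB : IsUnit B.det)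
    {μ : K} (hμ : μ ∈ spectrum K ((B⁻¹ * A).map f)) :
    ∃ x ≠ 0, A.map f *ᵥ x = μ • (B.map f *ᵥ x) := by
  rw [← spectrum_toLin', ← Module.End.hasEigenvalue_iff_mem_spectrum] at hμ
  obtain ⟨x, hx⟩ := hμ.exists_hasEigenvector
  refine ⟨x, hx.2, ?_⟩
  have hA : B.map f * (B⁻¹ * A).map f = A.map f := by
    rw [← Matrix.map_mul, ← Matrix.mul_assoc, mul_nonsing_inv _ hB, Matrix.one_mul]
  have hx' : (B⁻¹ * A).map f *ᵥ x = μ • x := hx.apply_eq_smul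
  rw [← hA, ← mulVec_mulVec, hx', mulVec_smul]

theorem PosDef.im_eq_zero_and_re_mem_Ioc_of_fromBlocks_pencil [Fintype m] [Fintype n]
    {P : Matrix m m ℂ} {W : Matrix n m ℂ} {D : Matrix n n ℂ} (hA : (fromBlocks P Wᴴ W D).PosDef)
    (hD : D.PosSemidef) {u : m → ℂ} {v : n → ℂ} (huv : Sum.elim u v ≠ 0) {μ : ℂ}
    (heig : fromBlocks P Wᴴ W D *ᵥ Sum.elim u v = μ • (fromBlocks P 0 W D *ᵥ Sum.elim u v)) :
    μ.im = 0 ∧ 0 < μ.re ∧ μ.re ≤ 1 := by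
  rcases eq_or_ne μ 1 with rfl | hμ
  · simp
  have hrow : W *ᵥ u + D *ᵥ v = 0 := by
    have h : W *ᵥ u + D *ᵥ v = μ • (W *ᵥ u + D *ᵥ v) :=
      funext fun i => by simpa [fromBlocks_mulVec] using congrFun heig (Sum.inr i)
    have h' : (1 - μ) • (W *ᵥ u + D *ᵥ v) = 0 := by rw [sub_smul, one_smul, ← h, sub_self]
    exact (smul_eq_zero.mp h').resolve_left (sub_ne_zero.mpr hμ.symm)
  have hcross : star u ⬝ᵥ (Wᴴ *ᵥ v) = -(star v ⬝ᵥ (D *ᵥ v)) := by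
    rw [star_dotProduct, star_mulVec, conjTranspose_conjTranspose, ← dotProduct_mulVec,
      eq_neg_of_add_eq_zero_left hrow, dotProduct_neg, star_neg,
      (IsSelfAdjoint.of_nonneg (hD.dotProduct_mulVec_nonneg v)).star_eq]
  have hform : star (Sum.elim u v) ⬝ᵥ (fromBlocks P Wᴴ W D *ᵥ Sum.elim u v) =
      star u ⬝ᵥ (P *ᵥ u) - star v ⬝ᵥ (D *ᵥ v) := by
    rw [Function.star_sumElim, sumElim_dotProduct_fromBlocks_mulVec, hrow, dotProduct_add,
      hcross, dotProduct_zero, add_zero, sub_eq_add_neg]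
  have hform' : star (Sum.elim u v) ⬝ᵥ (fromBlocks P Wᴴ W D *ᵥ Sum.elim u v) =
      μ * star u ⬝ᵥ (P *ᵥ u) := by
    rw [heig, dotProduct_smul, Function.star_sumElim, sumElim_dotProduct_fromBlocks_mulVec, hrow,
      zero_mulVec, add_zero, dotProduct_zero, add_zero, smul_eq_mul]
  exact Complex.im_eq_zero_and_re_mem_Ioc_of_mul_eq_sub (hD.dotProduct_mulVec_nonneg v)
    (hform ▸ hA.dotProduct_mulVec_pos huv) (hform'.symm.trans hform)

end Matrix

theorem blockTriangular_preconditioned_spectrum_in_unit_interval_general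
    (n₁ n₂ : ℕ)
    (Ahat : Matrix (Fin n₁) (Fin n₁) ℝ) (hA : Ahat.PosDef)
    (D : Matrix (Fin n₂) (Fin n₂) ℝ) (hD : D.PosDef)
    (W : Matrix (Fin n₂) (Fin n₁) ℝ)
    (A : Matrix (Fin n₁ ⊕ Fin n₂) (Fin n₁ ⊕ Fin n₂) ℝ)
    (hAdef : A = Matrix.fromBlocks Ahat Wᵀ W D)
    (hApd : A.PosDef)
    (BT : Matrix (Fin n₁ ⊕ Fin n₂) (Fin n₁ ⊕ Fin n₂) ℝ)
    (hBT : BT = Matrix.fromBlocks Ahat 0 W D)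
    (μ : ℂ) (hμ : μ ∈ spectrum ℂ ((BT⁻¹ * A).map Complex.ofReal)) :
    μ.im = 0 ∧ 0 < μ.re ∧ μ.re ≤ 1 := by
  have hBT_det : IsUnit BT.det := by
    rw [hBT, det_fromBlocks_zero₁₂]
    exact (mul_pos hA.det_pos hD.det_pos).ne'.isUnit
  obtain ⟨x, hx, hpencil⟩ :
      ∃ x ≠ 0, A.map Complex.ofReal *ᵥ x = μ • (BT.map Complex.ofReal *ᵥ x) :=
    exists_mulVec_eq_smul_mulVec_of_mem_spectrum_map_inv_mul Complex.ofRealHom hBT_det hμ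
  have hA_map : A.map Complex.ofReal =
      fromBlocks (Ahat.map Complex.ofReal) (W.map Complex.ofReal)ᴴ (W.map Complex.ofReal)
        (D.map Complex.ofReal) := by
    rw [hAdef, fromBlocks_map, conjTranspose_map_ofReal]
  have hBT_map : BT.map Complex.ofReal =
      fromBlocks (Ahat.map Complex.ofReal) 0 (W.map Complex.ofReal) (D.map Complex.ofReal) := by
    rw [hBT, fromBlocks_map, Matrix.map_zero _ Complex.ofReal_zero]
  rw [hA_map, hBT_map, ← Sum.elim_comp_inl_inr x] at hpencil
  rw [← Sum.elim_comp_inl_inr x] at hx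
  exact (hA_map ▸ hApd.map_ofReal).im_eq_zero_and_re_mem_Ioc_of_fromBlocks_pencil
    hD.posSemidef.map_ofReal hx hpencil

/-- Every complex eigenvalue of `B_T⁻¹ A`, where `A = [[Â, Wᵀ],[W, D]]` is positive
definite with `Â`, `D` symmetric positive definite and `B_T = [[Â, 0],[W, D]]`,
is a real number `μ` with `0 < μ ≤ 1`. -/
theorem blockTriangular_preconditioned_spectrum_in_unit_interval
    (n₁ n₂ : ℕ) (hn₁ : 0 < n₁) (hn₂ : 0 < n₂)
    (Ahat : Matrix (Fin n₁) (Fin n₁) ℝ) (hA : Ahat.PosDef)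
    (D : Matrix (Fin n₂) (Fin n₂) ℝ) (hD : D.PosDef)
    (W : Matrix (Fin n₂) (Fin n₁) ℝ)
    (A : Matrix (Fin n₁ ⊕ Fin n₂) (Fin n₁ ⊕ Fin n₂) ℝ)
    (hAdef : A = Matrix.fromBlocks Ahat Wᵀ W D)
    (hApd : A.PosDef)
    (BT : Matrix (Fin n₁ ⊕ Fin n₂) (Fin n₁ ⊕ Fin n₂) ℝ)
    (hBT : BT = Matrix.fromBlocks Ahat 0 W D)
    (μ : ℂ) (hμ : μ ∈ spectrum ℂ ((BT⁻¹ * A).map Complex.ofReal)) :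
    μ.im = 0 ∧ 0 < μ.re ∧ μ.re ≤ 1 :=
  blockTriangular_preconditioned_spectrum_in_unit_interval_general n₁ n₂ Ahat hA D hD W A hAdef hApd
    BT hBT μ hμ
end

section
/- Let n₁, n₂ be positive integers, Â an invertible real n₁×n₁ matrix, D an invertible real n₂×n₂ matrix, and W a real n₂×n₁ matrix. Form A = [[Â, Wᵀ],[W, D]], B_T = [[Â, 0],[W, D]], and the Schur complement S = D - W Â⁻¹ Wᵀ. Then the spectrum of B_T⁻¹ A (over ℂ) is contained in {1} ∪ σ(D⁻¹ S), where σ(D⁻¹ S) denotes the spectrum of D⁻¹ S. -/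
/-!
Writing `S = D - W Â⁻¹ Wᵀ`, one has `A = B_T * [[1, Â⁻¹ Wᵀ], [0, D⁻¹ S]]`, so `B_T⁻¹ A` is block upper
triangular. Its characteristic polynomial is the product of those of the diagonal blocks `1` and
`D⁻¹ S`, hence its eigenvalues are `1` and those of `D⁻¹ S`.
-/

open Matrix

theorem spectrum_one_subset {𝕜 A : Type*} [Field 𝕜] [Ring A] [Algebra 𝕜 A] :
    spectrum 𝕜 (1 : A) ⊆ {1} := by
  rcases subsingleton_or_nontrivial A with _ | _
  · simp [spectrum.of_subsingleton]
  · exact (spectrum.one_eq).subset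

namespace Matrix

variable {m n K R : Type*} [Fintype m] [Fintype n] [DecidableEq m] [DecidableEq n]

theorem spectrum_fromBlocks_zero₂₁ [Field K] (P : Matrix m m K) (Q : Matrix m n K)
    (T : Matrix n n K) :
    spectrum K (fromBlocks P Q 0 T) = spectrum K P ∪ spectrum K T := by
  ext μ
  simp only [Set.mem_union, mem_spectrum_iff_isRoot_charpoly, charpoly_fromBlocks_zero₂₁,
    Polynomial.root_mul]

theorem inv_fromBlocks_zero₁₂_mul_fromBlocks [CommRing R] {P : Matrix m m R} {T : Matrix n n R}
    (hP : IsUnit P.det) (hT : IsUnit T.det) (Q : Matrix m n R) (C : Matrix n m R) :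
    (fromBlocks P 0 C T)⁻¹ * fromBlocks P Q C T =
      fromBlocks 1 (P⁻¹ * Q) 0 (T⁻¹ * (T - C * P⁻¹ * Q)) := by
  have hunit : IsUnit (fromBlocks P 0 C T).det := by
    rw [det_fromBlocks_zero₁₂]
    exact hP.mul hT
  have factor : fromBlocks P Q C T =
      fromBlocks P 0 C T * fromBlocks 1 (P⁻¹ * Q) 0 (T⁻¹ * (T - C * P⁻¹ * Q)) := by
    simp only [fromBlocks_multiply, Matrix.mul_one, Matrix.mul_zero, Matrix.zero_mul, add_zero,
      ← Matrix.mul_assoc, mul_nonsing_inv _ hP, mul_nonsing_inv _ hT, Matrix.one_mul,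
      add_sub_cancel]
  rw [factor, nonsing_inv_mul_cancel_left _ _ hunit]

end Matrix

theorem blockTriangular_preconditioned_spectrum_subset_general
    (n₁ n₂ : ℕ)
    (Ahat : Matrix (Fin n₁) (Fin n₁) ℝ) (hA : IsUnit Ahat.det)
    (D : Matrix (Fin n₂) (Fin n₂) ℝ) (hD : IsUnit D.det)
    (W : Matrix (Fin n₂) (Fin n₁) ℝ)
    (A : Matrix (Fin n₁ ⊕ Fin n₂) (Fin n₁ ⊕ Fin n₂) ℝ)
    (hAdef : A = Matrix.fromBlocks Ahat Wᵀ W D)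
    (BT : Matrix (Fin n₁ ⊕ Fin n₂) (Fin n₁ ⊕ Fin n₂) ℝ)
    (hBT : BT = Matrix.fromBlocks Ahat 0 W D)
    (S : Matrix (Fin n₂) (Fin n₂) ℝ) (hS : S = D - W * Ahat⁻¹ * Wᵀ) :
    spectrum ℂ ((BT⁻¹ * A).map Complex.ofReal) ⊆
      {1} ∪ spectrum ℂ ((D⁻¹ * S).map Complex.ofReal) := by
  subst hAdef hBT hS
  rw [inv_fromBlocks_zero₁₂_mul_fromBlocks hA hD, fromBlocks_map,
    Matrix.map_one _ Complex.ofReal_zero Complex.ofReal_one,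
    Matrix.map_zero _ Complex.ofReal_zero,
    spectrum_fromBlocks_zero₂₁]
  exact Set.union_subset_union_left _ spectrum_one_subset

/-- The spectrum of `B_T⁻¹ A` (over `ℂ`) is contained in `{1} ∪ σ(D⁻¹ S)`,
where `A = [[Â, Wᵀ],[W, D]]`, `B_T = [[Â, 0],[W, D]]` and `S = D - W Â⁻¹ Wᵀ`
is the Schur complement of `Â` in `A`. -/
theorem blockTriangular_preconditioned_spectrum_subset
    (n₁ n₂ : ℕ) (hn₁ : 0 < n₁) (hn₂ : 0 < n₂)
    (Ahat : Matrix (Fin n₁) (Fin n₁) ℝ) (hA : IsUnit Ahat.det)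
    (D : Matrix (Fin n₂) (Fin n₂) ℝ) (hD : IsUnit D.det)
    (W : Matrix (Fin n₂) (Fin n₁) ℝ)
    (A : Matrix (Fin n₁ ⊕ Fin n₂) (Fin n₁ ⊕ Fin n₂) ℝ)
    (hAdef : A = Matrix.fromBlocks Ahat Wᵀ W D)
    (BT : Matrix (Fin n₁ ⊕ Fin n₂) (Fin n₁ ⊕ Fin n₂) ℝ)
    (hBT : BT = Matrix.fromBlocks Ahat 0 W D)
    (S : Matrix (Fin n₂) (Fin n₂) ℝ) (hS : S = D - W * Ahat⁻¹ * Wᵀ) :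
    spectrum ℂ ((BT⁻¹ * A).map Complex.ofReal) ⊆
      {1} ∪ spectrum ℂ ((D⁻¹ * S).map Complex.ofReal) :=
  blockTriangular_preconditioned_spectrum_subset_general n₁ n₂ Ahat hA D hD W A hAdef BT hBT S hS
end

section
/- Let n₁, n₂ be positive integers, Â an invertible real n₁×n₁ matrix, D an invertible real n₂×n₂ matrix, and W a real n₂×n₁ matrix. Form A = [[Â, Wᵀ],[W, D]] and B_T = [[Â, 0],[W, D]]. Suppose μ ∈ ℝ with μ ≠ 1 and v = (v₁, v₂) ≠ 0 (with v₁ ∈ ℝ^{n₁}, v₂ ∈ ℝ^{n₂}) satisfy B_T⁻¹ A v = μ v. Then v₁ ≠ 0 and (Â - Wᵀ D⁻¹ W) v₁ = μ Â v₁; equivalently, (I - Â⁻¹ Wᵀ D⁻¹ W) v₁ = μ v₁. -/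
/-!
Multiplying the eigen-equation by `B_T` turns it into the pencil equation `A v = μ B_T v`.
Since `A` and `B_T` share their second block row, that row reads `(1 - μ) (W v₁ + D v₂) = 0`,
so `v₂ = -D⁻¹ W v₁`; substituting into the first row gives the Schur complement equation, and
`v₁ = 0` would force `v = 0`.
-/

open Matrix

namespace Matrix

variable {n m : Type*} [Fintype n] [Fintype m] {R : Type*} [CommRing R]

theorem fromBlocks_mulVec_eq_smul_fromBlocks_zero₁₂_mulVec_iff (P : Matrix n n R)
    (Q : Matrix n m R) (C : Matrix m n R) (S : Matrix m m R) (v₁ : n → R) (v₂ : m → R) (μ : R) :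
    fromBlocks P Q C S *ᵥ Sum.elim v₁ v₂ = μ • (fromBlocks P 0 C S *ᵥ Sum.elim v₁ v₂) ↔
      P *ᵥ v₁ + Q *ᵥ v₂ = μ • (P *ᵥ v₁) ∧ C *ᵥ v₁ + S *ᵥ v₂ = μ • (C *ᵥ v₁ + S *ᵥ v₂) := by
  have smul_elim (a : n → R) (b : m → R) : μ • Sum.elim a b = Sum.elim (μ • a) (μ • b) :=
    Sum.comp_elim (μ • ·) a b
  simp only [fromBlocks_mulVec, Sum.elim_comp_inl, Sum.elim_comp_inr, zero_mulVec, add_zero,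
    smul_elim, Sum.elim_eq_iff]

theorem eq_neg_inv_mulVec_of_mulVec_add_mulVec_eq_zero [DecidableEq m] {C : Matrix m n R}
    {S : Matrix m m R} (hS : IsUnit S.det) {v₁ : n → R} {v₂ : m → R}
    (h : C *ᵥ v₁ + S *ᵥ v₂ = 0) : v₂ = -(S⁻¹ *ᵥ C *ᵥ v₁) := by
  rw [eq_neg_iff_add_eq_zero, add_comm]
  simpa only [mulVec_add, mulVec_mulVec, nonsing_inv_mul _ hS, one_mulVec, mulVec_zero]
    using congrArg (S⁻¹ *ᵥ ·) h

variable [DecidableEq n]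

theorem mulVec_eq_smul_mulVec_of_inv_mul_mulVec_eq_smul {A B : Matrix n n R} (hB : IsUnit B.det)
    {v : n → R} {μ : R} (h : (B⁻¹ * A) *ᵥ v = μ • v) : A *ᵥ v = μ • (B *ᵥ v) := by
  simpa only [mulVec_mulVec, mulVec_smul, ← Matrix.mul_assoc, mul_nonsing_inv _ hB,
    Matrix.one_mul] using congrArg (B *ᵥ ·) h

theorem one_sub_inv_mul_mulVec_eq_smul_of_sub_mulVec_eq_smul {P M : Matrix n n R}
    (hP : IsUnit P.det) {v : n → R} {μ : R} (h : (P - M) *ᵥ v = μ • (P *ᵥ v)) :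
    (1 - P⁻¹ * M) *ᵥ v = μ • v := by
  simpa only [mulVec_mulVec, mulVec_smul, Matrix.mul_sub, nonsing_inv_mul _ hP,
    one_mulVec] using congrArg (P⁻¹ *ᵥ ·) h

end Matrix

theorem eq_zero_of_eq_smul_of_ne_one {𝕜 V : Type*} [Field 𝕜] [AddCommGroup V] [Module 𝕜 V]
    {x : V} {μ : 𝕜} (hμ : μ ≠ 1) (h : x = μ • x) : x = 0 := by
  have : (1 - μ) • x = 0 := by rw [sub_smul, one_smul, ← h, sub_self]
  exact (smul_eq_zero.mp this).resolve_left (sub_ne_zero.mpr hμ.symm)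

theorem blockTriangular_eigenvector_first_component_general
    (n₁ n₂ : ℕ)
    (Ahat : Matrix (Fin n₁) (Fin n₁) ℝ) (hA : IsUnit Ahat.det)
    (D : Matrix (Fin n₂) (Fin n₂) ℝ) (hD : IsUnit D.det)
    (W : Matrix (Fin n₂) (Fin n₁) ℝ)
    (A : Matrix (Fin n₁ ⊕ Fin n₂) (Fin n₁ ⊕ Fin n₂) ℝ)
    (hAdef : A = Matrix.fromBlocks Ahat Wᵀ W D)
    (BT : Matrix (Fin n₁ ⊕ Fin n₂) (Fin n₁ ⊕ Fin n₂) ℝ)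
    (hBT : BT = Matrix.fromBlocks Ahat 0 W D)
    (μ : ℝ) (hμ : μ ≠ 1)
    (v₁ : Fin n₁ → ℝ) (v₂ : Fin n₂ → ℝ)
    (hv : Sum.elim v₁ v₂ ≠ 0)
    (heig : (BT⁻¹ * A) *ᵥ Sum.elim v₁ v₂ = μ • Sum.elim v₁ v₂) :
    v₁ ≠ 0 ∧ (Ahat - Wᵀ * D⁻¹ * W) *ᵥ v₁ = μ • (Ahat *ᵥ v₁) ∧
      (1 - Ahat⁻¹ * Wᵀ * D⁻¹ * W) *ᵥ v₁ = μ • v₁ := by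
  have hBTu : IsUnit BT.det := by
    rw [hBT, det_fromBlocks_zero₁₂]
    exact hA.mul hD
  have hpencil := mulVec_eq_smul_mulVec_of_inv_mul_mulVec_eq_smul hBTu heig
  rw [hAdef, hBT, fromBlocks_mulVec_eq_smul_fromBlocks_zero₁₂_mulVec_iff] at hpencil
  obtain ⟨hrow₁, hrow₂⟩ := hpencil
  have hv₂ : v₂ = -(D⁻¹ *ᵥ W *ᵥ v₁) :=
    eq_neg_inv_mulVec_of_mulVec_add_mulVec_eq_zero hD (eq_zero_of_eq_smul_of_ne_one hμ hrow₂)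
  have hschur : (Ahat - Wᵀ * D⁻¹ * W) *ᵥ v₁ = μ • (Ahat *ᵥ v₁) := by
    rw [← hrow₁, hv₂, sub_mulVec, mulVec_neg, mulVec_mulVec, mulVec_mulVec, Matrix.mul_assoc,
      sub_eq_add_neg]
  refine ⟨?_, hschur, ?_⟩
  · rintro rfl
    exact hv (by simp [hv₂])
  · simpa only [Matrix.mul_assoc] using
      one_sub_inv_mul_mulVec_eq_smul_of_sub_mulVec_eq_smul hA hschur

/-- If `μ ≠ 1` is an eigenvalue of `B_T⁻¹ A` with eigenvector `v = (v₁, v₂) ≠ 0`, then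
`v₁ ≠ 0` and `(Â - Wᵀ D⁻¹ W) v₁ = μ Â v₁`; equivalently
`(I - Â⁻¹ Wᵀ D⁻¹ W) v₁ = μ v₁`.  Here `A = [[Â, Wᵀ],[W, D]]` and
`B_T = [[Â, 0],[W, D]]` with `Â` and `D` invertible. -/
theorem blockTriangular_eigenvector_first_component
    (n₁ n₂ : ℕ) (hn₁ : 0 < n₁) (hn₂ : 0 < n₂)
    (Ahat : Matrix (Fin n₁) (Fin n₁) ℝ) (hA : IsUnit Ahat.det)
    (D : Matrix (Fin n₂) (Fin n₂) ℝ) (hD : IsUnit D.det)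
    (W : Matrix (Fin n₂) (Fin n₁) ℝ)
    (A : Matrix (Fin n₁ ⊕ Fin n₂) (Fin n₁ ⊕ Fin n₂) ℝ)
    (hAdef : A = Matrix.fromBlocks Ahat Wᵀ W D)
    (BT : Matrix (Fin n₁ ⊕ Fin n₂) (Fin n₁ ⊕ Fin n₂) ℝ)
    (hBT : BT = Matrix.fromBlocks Ahat 0 W D)
    (μ : ℝ) (hμ : μ ≠ 1)
    (v₁ : Fin n₁ → ℝ) (v₂ : Fin n₂ → ℝ)
    (hv : Sum.elim v₁ v₂ ≠ 0)
    (heig : (BT⁻¹ * A) *ᵥ Sum.elim v₁ v₂ = μ • Sum.elim v₁ v₂) :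
    v₁ ≠ 0 ∧ (Ahat - Wᵀ * D⁻¹ * W) *ᵥ v₁ = μ • (Ahat *ᵥ v₁) ∧
      (1 - Ahat⁻¹ * Wᵀ * D⁻¹ * W) *ᵥ v₁ = μ • v₁ :=
  blockTriangular_eigenvector_first_component_general n₁ n₂ Ahat hA D hD W A hAdef BT hBT μ hμ v₁ v₂
    hv heig
end

section
/- Let n, m, N be positive integers, K₀ a symmetric positive definite real n×n matrix, K₁, …, K_m symmetric real n×n matrices, and g₁, …, g_m vectors in ℝ^N satisfying g_lᵀ g_k = 0 for l ≠ k and g_kᵀ g_k = c for all k, with c ≥ 0. Define Â = K₀, W = Σ_{k=1}^m g_k ⊗ K_k, D = I_N ⊗ K₀, A = [[Â, Wᵀ],[W, D]], and B_T = [[Â, 0],[W, D]]. Suppose for each k every eigenvalue of K₀⁻¹ K_k lies in [-β_k, β_k] with β_k ≥ 0. Then every real eigenvalue μ of B_T⁻¹ A satisfies μ ≥ 1 - c · Σ_{k=1}^m β_k². -/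
/-!
Write an eigenvector as `(x, y)`. For `μ ≠ 1` the second block row of `A v = μ B_T v` forces
`y = -D⁻¹ W x`, and the first then gives `(1 - μ) xᵀK₀x = (Wx)ᵀ D⁻¹ (Wx)` with `x ≠ 0`.
Since `D⁻¹ = I ⊗ K₀⁻¹` and the `g_k` are orthogonal of squared norm `c`, the right side is
`c Σ_k (K_k x)ᵀ K₀⁻¹ (K_k x)`, and each term is at most `β_k² xᵀK₀x` because
`K_k K₀⁻¹ K_k ≤ β_k² K₀` in the Loewner order: conjugating by `K₀^{-1/2}` turns this into
`S² ≤ β_k²` for the symmetric matrix `S = K₀^{-1/2} K_k K₀^{-1/2}`, which is similar to `K₀⁻¹ K_k`.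
-/

open Matrix Kronecker

section CFC

variable {A : Type*} [PartialOrder A] [Ring A] [StarRing A] [TopologicalSpace A]
  [StarOrderedRing A] [Algebra ℝ A] [ContinuousFunctionalCalculus ℝ A IsSelfAdjoint]
  [NonnegSpectrumClass ℝ A] [IsSemitopologicalRing A] [T2Space A]

theorem mul_ringInverse_mul_le_sq_smul {a b : A} (ha : IsStrictlyPositive a)
    (hb : IsSelfAdjoint b) {β : ℝ} (hspec : ∀ ν ∈ spectrum ℝ (Ring.inverse a * b), |ν| ≤ β) :
    b * Ring.inverse a * b ≤ β ^ 2 • a := by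
  obtain ⟨s, hs, hs_sa, rfl⟩ :=
    CStarAlgebra.isStrictlyPositive_iff_exists_isUnit_and_isSelfAdjoint_and_eq_mul_self.mp ha
  lift s to Aˣ using hs
  have hinv : Ring.inverse ((s : A) * s) = ↑s⁻¹ * ↑s⁻¹ := by
    rw [← Units.val_mul, Ring.inverse_unit, _root_.mul_inv_rev, Units.val_mul]
  have hstar : star (↑s⁻¹ : A) = ↑s⁻¹ := by
    rw [← Units.coe_star_inv, show star s = s from Units.ext hs_sa]
  set S : A := ↑s⁻¹ * b * ↑s⁻¹
  have hS : IsSelfAdjoint S := by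
    simpa only [S, hstar] using hb.conjugate (↑s⁻¹ : A)
  have hspecS : ∀ ν ∈ spectrum ℝ S, ν ^ 2 ≤ β ^ 2 := by
    have hsim : Ring.inverse ((s : A) * s) * b = ↑s⁻¹ * S * s := by
      simp only [S, hinv, mul_assoc, Units.inv_mul, mul_one]
    intro ν hν
    rw [hsim, spectrum.units_conjugate'] at hspec
    exact sq_le_sq' (abs_le.mp (hspec ν hν)).1 (abs_le.mp (hspec ν hν)).2
  have hSS : S ^ 2 ≤ algebraMap ℝ A (β ^ 2) := by
    rw [← cfc_pow_id (R := ℝ) (p := IsSelfAdjoint) S 2]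
    exact (cfc_le_algebraMap_iff _ _ S).mpr hspecS
  calc b * Ring.inverse ((s : A) * s) * b = s * S ^ 2 * s := by
        simp [S, hinv, pow_two, mul_assoc]
    _ ≤ s * algebraMap ℝ A (β ^ 2) * s := hs_sa.conjugate_le_conjugate hSS
    _ = β ^ 2 • ((s : A) * s) := by
        rw [Algebra.algebraMap_eq_smul_one, mul_smul_comm, mul_one, smul_mul_assoc]

end CFC

namespace Matrix

section Loewner

open scoped MatrixOrder

variable {n : Type*} [Fintype n]

theorem exists_mulVec_eq_smul_of_mem_spectrum [DecidableEq n] {M : Matrix n n ℝ} {ν : ℝ}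
    (hν : ν ∈ spectrum ℝ M) : ∃ v ≠ 0, M *ᵥ v = ν • v := by
  rw [← spectrum_toLin', ← Module.End.hasEigenvalue_iff_mem_spectrum] at hν
  obtain ⟨v, hv⟩ := hν.exists_hasEigenvector
  exact ⟨v, hv.2, by simpa using hv.1⟩

theorem dotProduct_mulVec_le_of_le {P Q : Matrix n n ℝ} (h : P ≤ Q) (x : n → ℝ) :
    x ⬝ᵥ P *ᵥ x ≤ x ⬝ᵥ Q *ᵥ x := by
  have := (le_iff.mp h).dotProduct_mulVec_nonneg x
  rw [star_trivial, sub_mulVec, dotProduct_sub] at this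
  linarith

theorem mulVec_dotProduct_inv_mulVec_le [DecidableEq n] {K₀ K : Matrix n n ℝ} (hK₀ : K₀.PosDef)
    (hK : K.IsHermitian) {β : ℝ}
    (hβ : ∀ (ν : ℝ) (v : n → ℝ), v ≠ 0 → (K₀⁻¹ * K) *ᵥ v = ν • v → -β ≤ ν ∧ ν ≤ β)
    (x : n → ℝ) :
    K *ᵥ x ⬝ᵥ K₀⁻¹ *ᵥ (K *ᵥ x) ≤ β ^ 2 * (x ⬝ᵥ K₀ *ᵥ x) := by
  have hle : K * K₀⁻¹ * K ≤ β ^ 2 • K₀ := by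
    rw [nonsing_inv_eq_ringInverse]
    refine mul_ringInverse_mul_le_sq_smul hK₀.isStrictlyPositive hK fun ν hν => ?_
    obtain ⟨v, hv, hνv⟩ := exists_mulVec_eq_smul_of_mem_spectrum hν
    rw [← nonsing_inv_eq_ringInverse] at hνv
    exact abs_le.mpr (hβ ν v hv hνv)
  have hKT : Kᵀ = K := by
    rw [← conjTranspose_eq_transpose_of_trivial, hK.eq]
  calc K *ᵥ x ⬝ᵥ K₀⁻¹ *ᵥ (K *ᵥ x) = x ⬝ᵥ (K * K₀⁻¹ * K) *ᵥ x := by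
        rw [← mulVec_mulVec, ← mulVec_mulVec, dotProduct_mulVec x K, ← mulVec_transpose, hKT]
    _ ≤ x ⬝ᵥ (β ^ 2 • K₀) *ᵥ x := dotProduct_mulVec_le_of_le hle x
    _ = β ^ 2 * (x ⬝ᵥ K₀ *ᵥ x) := by rw [smul_mulVec, dotProduct_smul, smul_eq_mul]

end Loewner

theorem vec_mul_dotProduct_one_kronecker_mulVec {R n m N : Type*} [CommRing R] [Fintype n]
    [Fintype m] [Fintype N] [DecidableEq N] (a : m → n → R) (g : m → N → R) {c : R}
    (horth : ∀ l k, l ≠ k → g l ⬝ᵥ g k = 0) (hnorm : ∀ k, g k ⬝ᵥ g k = c)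
    (M : Matrix n n R) :
    vec ((of a)ᵀ * of g) ⬝ᵥ ((1 : Matrix N N R) ⊗ₖ M) *ᵥ vec ((of a)ᵀ * of g)
      = c * ∑ k, a k ⬝ᵥ M *ᵥ a k := by
  classical
  have hg : of g * (of g)ᵀ = c • 1 := by
    ext k l
    rcases eq_or_ne k l with rfl | hkl
    · simpa [mul_apply, dotProduct] using hnorm k
    · simpa [mul_apply, dotProduct, hkl] using horth k l hkl
  rw [kronecker_mulVec_vec, transpose_one, Matrix.mul_one, vec_dotProduct_vec, transpose_mul,
    transpose_transpose, show (of g)ᵀ * of a * (M * ((of a)ᵀ * of g))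
      = (of g)ᵀ * (of a * M * (of a)ᵀ) * of g by simp only [Matrix.mul_assoc],
    trace_mul_cycle, hg, Matrix.smul_mul, Matrix.one_mul, trace_smul, smul_eq_mul]
  simp [trace, Matrix.mul_assoc, mul_apply, dotProduct, mulVec]

theorem sum_replicateCol_kronecker_mulVec {R n m N : Type*} [CommRing R] [Fintype n]
    [Fintype m] (g : m → N → R) (K : m → Matrix n n R) (x : n → R) :
    (∑ k, reindex (Equiv.refl (N × n)) (Equiv.punitProd n) (replicateCol Unit (g k) ⊗ₖ K k))
      *ᵥ x = vec ((of fun k => K k *ᵥ x)ᵀ * of g) := by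
  ext ⟨i, p⟩
  simp only [mulVec, dotProduct, sum_apply, reindex_apply, submatrix_apply, kroneckerMap_apply,
    replicateCol_apply, vec, mul_apply, transpose_apply, of_apply, Finset.sum_mul]
  rw [Finset.sum_comm]
  simp [mul_comm, mul_left_comm]

theorem schur_identity_of_fromBlocks_mulVec_eq_smul {𝕜 ι κ : Type*} [Field 𝕜] [Fintype ι]
    [Fintype κ] [DecidableEq κ] {K₀ : Matrix ι ι 𝕜} {W : Matrix κ ι 𝕜}
    {D : Matrix κ κ 𝕜} (hD : IsUnit D.det) {μ : 𝕜} (hμ : μ ≠ 1) {x : ι → 𝕜} {y : κ → 𝕜}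
    (h : fromBlocks K₀ Wᵀ W D *ᵥ Sum.elim x y = μ • fromBlocks K₀ 0 W D *ᵥ Sum.elim x y) :
    y = -(D⁻¹ *ᵥ W *ᵥ x) ∧ (1 - μ) * (x ⬝ᵥ K₀ *ᵥ x) = W *ᵥ x ⬝ᵥ D⁻¹ *ᵥ W *ᵥ x := by
  have htop : K₀ *ᵥ x + Wᵀ *ᵥ y = μ • K₀ *ᵥ x := by
    ext i
    simpa [fromBlocks_mulVec] using congrFun h (Sum.inl i)
  have hbot : W *ᵥ x + D *ᵥ y = μ • (W *ᵥ x + D *ᵥ y) := by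
    ext i
    simpa [fromBlocks_mulVec] using congrFun h (Sum.inr i)
  have hWD : W *ᵥ x + D *ᵥ y = 0 := by
    have : (1 - μ) • (W *ᵥ x + D *ᵥ y) = 0 := by rw [sub_smul, one_smul, ← hbot, sub_self]
    exact (smul_eq_zero.mp this).resolve_left (sub_ne_zero.mpr hμ.symm)
  have hy : y = -(D⁻¹ *ᵥ W *ᵥ x) := by
    rw [← mulVec_neg, ← eq_neg_of_add_eq_zero_right hWD, mulVec_mulVec, nonsing_inv_mul _ hD,
      one_mulVec]
  refine ⟨hy, ?_⟩
  have hquad := congrArg (x ⬝ᵥ ·) htop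
  simp only [dotProduct_add, dotProduct_smul, smul_eq_mul] at hquad
  rw [dotProduct_mulVec x Wᵀ, vecMul_transpose, hy, dotProduct_neg] at hquad
  linear_combination hquad

end Matrix

theorem blockTriangular_eigenvalue_lower_bound_p_one_general
    (n m N : ℕ)
    (K₀ : Matrix (Fin n) (Fin n) ℝ) (hK₀ : K₀.PosDef)
    (K : Fin m → Matrix (Fin n) (Fin n) ℝ) (hK : ∀ k, (K k).IsHermitian)
    (g : Fin m → (Fin N → ℝ)) (c : ℝ) (hc : 0 ≤ c)
    (horth : ∀ l k, l ≠ k → g l ⬝ᵥ g k = 0)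
    (hnorm : ∀ k, g k ⬝ᵥ g k = c)
    (W : Matrix (Fin N × Fin n) (Fin n) ℝ)
    (hW : W = ∑ k, Matrix.reindex (Equiv.refl (Fin N × Fin n)) (Equiv.punitProd (Fin n))
        ((Matrix.replicateCol Unit (g k)) ⊗ₖ K k))
    (D : Matrix (Fin N × Fin n) (Fin N × Fin n) ℝ)
    (hD : D = (1 : Matrix (Fin N) (Fin N) ℝ) ⊗ₖ K₀)
    (β : Fin m → ℝ)
    (hbound : ∀ k (ν : ℝ) (v : Fin n → ℝ), v ≠ 0 → (K₀⁻¹ * K k) *ᵥ v = ν • v →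
      -β k ≤ ν ∧ ν ≤ β k)
    (A : Matrix (Fin n ⊕ Fin N × Fin n) (Fin n ⊕ Fin N × Fin n) ℝ)
    (hAdef : A = Matrix.fromBlocks K₀ Wᵀ W D)
    (BT : Matrix (Fin n ⊕ Fin N × Fin n) (Fin n ⊕ Fin N × Fin n) ℝ)
    (hBT : BT = Matrix.fromBlocks K₀ 0 W D)
    (μ : ℝ) (v : Fin n ⊕ Fin N × Fin n → ℝ) (hv : v ≠ 0)
    (heig : (BT⁻¹ * A) *ᵥ v = μ • v) :
    1 - c * ∑ k, (β k) ^ 2 ≤ μ := by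
  have hK₀det : IsUnit K₀.det := isUnit_iff_ne_zero.mpr hK₀.det_pos.ne'
  have hDdet : IsUnit D.det := by
    rw [hD, det_kronecker, det_one, one_pow, one_mul]
    exact hK₀det.pow _
  have hBTdet : IsUnit BT.det := by
    rw [hBT, det_fromBlocks_zero₁₂]
    exact hK₀det.mul hDdet
  have hpencil : A *ᵥ v = μ • BT *ᵥ v := by
    rw [← mulVec_smul, ← heig, mulVec_mulVec, ← Matrix.mul_assoc, mul_nonsing_inv _ hBTdet,
      Matrix.one_mul]
  rcases eq_or_ne μ 1 with rfl | hμ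
  · have : 0 ≤ c * ∑ k, β k ^ 2 := by positivity
    linarith
  obtain ⟨x, y, rfl⟩ : ∃ x y, v = Sum.elim x y := ⟨_, _, (Sum.elim_comp_inl_inr v).symm⟩
  rw [hAdef, hBT] at hpencil
  obtain ⟨hy, hschur⟩ := schur_identity_of_fromBlocks_mulVec_eq_smul hDdet hμ hpencil
  have hx : x ≠ 0 := fun hx => hv (by rw [hy, hx]; simp)
  have hWx : W *ᵥ x ⬝ᵥ D⁻¹ *ᵥ W *ᵥ x ≤ (c * ∑ k, β k ^ 2) * (x ⬝ᵥ K₀ *ᵥ x) := by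
    rw [hW, sum_replicateCol_kronecker_mulVec, hD, inv_kronecker, inv_one,
      vec_mul_dotProduct_one_kronecker_mulVec _ _ horth hnorm, mul_assoc, Finset.sum_mul]
    gcongr with k
    exact mulVec_dotProduct_inv_mulVec_le hK₀ (hK k) (hbound k) x
  have hpos : 0 < x ⬝ᵥ K₀ *ᵥ x := by simpa using hK₀.dotProduct_mulVec_pos hx
  linarith [le_of_mul_le_mul_right (hschur.trans_le hWx) hpos]

/-- Lower eigenvalue bound for the block-triangular preconditioned Galerkin
matrix in the case `p = 1`: with `Â = K₀`, `W = Σ_k g_k ⊗ K_k`, `D = I_N ⊗ K₀`,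
pairwise orthogonal `g_k` of common squared norm `c ≥ 0`, and the eigenvalues of
each `K₀⁻¹ K_k` contained in `[-β_k, β_k]`, every real eigenvalue `μ` of
`B_T⁻¹ A` satisfies `μ ≥ 1 - c Σ_k β_k²`. -/
theorem blockTriangular_eigenvalue_lower_bound_p_one
    (n m N : ℕ) (hn : 0 < n) (hm : 0 < m) (hN : 0 < N)
    (K₀ : Matrix (Fin n) (Fin n) ℝ) (hK₀ : K₀.PosDef)
    (K : Fin m → Matrix (Fin n) (Fin n) ℝ) (hK : ∀ k, (K k).IsHermitian)
    (g : Fin m → (Fin N → ℝ)) (c : ℝ) (hc : 0 ≤ c)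
    (horth : ∀ l k, l ≠ k → g l ⬝ᵥ g k = 0)
    (hnorm : ∀ k, g k ⬝ᵥ g k = c)
    (W : Matrix (Fin N × Fin n) (Fin n) ℝ)
    (hW : W = ∑ k, Matrix.reindex (Equiv.refl (Fin N × Fin n)) (Equiv.punitProd (Fin n))
        ((Matrix.replicateCol Unit (g k)) ⊗ₖ K k))
    (D : Matrix (Fin N × Fin n) (Fin N × Fin n) ℝ)
    (hD : D = (1 : Matrix (Fin N) (Fin N) ℝ) ⊗ₖ K₀)
    (β : Fin m → ℝ) (hβ : ∀ k, 0 ≤ β k)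
    (hbound : ∀ k (ν : ℝ) (v : Fin n → ℝ), v ≠ 0 → (K₀⁻¹ * K k) *ᵥ v = ν • v →
      -β k ≤ ν ∧ ν ≤ β k)
    (A : Matrix (Fin n ⊕ Fin N × Fin n) (Fin n ⊕ Fin N × Fin n) ℝ)
    (hAdef : A = Matrix.fromBlocks K₀ Wᵀ W D)
    (BT : Matrix (Fin n ⊕ Fin N × Fin n) (Fin n ⊕ Fin N × Fin n) ℝ)
    (hBT : BT = Matrix.fromBlocks K₀ 0 W D)
    (μ : ℝ) (v : Fin n ⊕ Fin N × Fin n → ℝ) (hv : v ≠ 0)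
    (heig : (BT⁻¹ * A) *ᵥ v = μ • v) :
    1 - c * ∑ k, (β k) ^ 2 ≤ μ :=
  blockTriangular_eigenvalue_lower_bound_p_one_general n m N K₀ hK₀ K hK g c hc horth hnorm W hW D
    hD β hbound A hAdef BT hBT μ v hv heig
end

section
/- Let Ω be a measurable subset of ℝ^d, ā > 0 a constant, and w : Ω → ℝ a measurable function with w_min ≤ w(x) ≤ w_max for almost every x ∈ Ω. Let φ₁, …, φ_n : ℝ^d → ℝ be differentiable functions whose gradients ∇φ_s are square-integrable on Ω, and define the n×n matrices K₀(r,s) = ∫_Ω ā ∇φ_s(x)·∇φ_r(x) dx and K(r,s) = ∫_Ω w(x) ∇φ_s(x)·∇φ_r(x) dx. Assume K₀ is positive definite. Then every real eigenvalue μ of K₀⁻¹ K satisfies w_min/ā ≤ μ ≤ w_max/ā. -/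
/-!
With `g = ∑ₛ zₛ ∇φₛ`, the quadratic forms of the two matrices are `zᵀ K₀ z = ā ∫_Ω |g|²` and
`zᵀ K z = ∫_Ω w |g|²`. Pairing `K z = μ K₀ z` with `z` shows that `μ` is the Rayleigh quotient
`∫_Ω w |g|² / (ā ∫_Ω |g|²)`, whose denominator is positive because `K₀` is positive definite;
the pointwise bounds on `w` then bound the quotient.
-/

open Matrix MeasureTheory
open scoped RealInnerProductSpace

section WeightedGram

variable {α E : Type*} {m : MeasurableSpace α} {μ : Measure α} [NormedAddCommGroup E]

theorem integral_mul_norm_sq_mem_Icc {c : α → ℝ} {a b : ℝ} (hc : AEStronglyMeasurable c μ)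
    (hcab : ∀ᵐ x ∂μ, a ≤ c x ∧ c x ≤ b) {g : α → E} (hg : MemLp g 2 μ) :
    ∫ x, c x * ‖g x‖ ^ 2 ∂μ ∈ Set.Icc (a * ∫ x, ‖g x‖ ^ 2 ∂μ) (b * ∫ x, ‖g x‖ ^ 2 ∂μ) := by
  have hg2 : Integrable (fun x => ‖g x‖ ^ 2) μ := hg.integrable_norm_pow two_ne_zero
  have hcg2 : Integrable (fun x => c x * ‖g x‖ ^ 2) μ :=
    hg2.bdd_mul hc (hcab.mono fun x hx => abs_le_max_abs_abs hx.1 hx.2)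
  rw [← integral_const_mul, ← integral_const_mul]
  constructor
  · refine integral_mono_ae (hg2.const_mul a) hcg2 ?_
    filter_upwards [hcab] with x hx
    exact mul_le_mul_of_nonneg_right hx.1 (sq_nonneg _)
  · refine integral_mono_ae hcg2 (hg2.const_mul b) ?_
    filter_upwards [hcab] with x hx
    exact mul_le_mul_of_nonneg_right hx.2 (sq_nonneg _)

variable [InnerProductSpace ℝ E]

theorem MeasureTheory.MemLp.integrable_inner {f g : α → E} (hf : MemLp f 2 μ)
    (hg : MemLp g 2 μ) : Integrable (fun x => ⟪f x, g x⟫) μ := by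
  refine (L2.integrable_inner (𝕜 := ℝ) (hf.toLp f) (hg.toLp g)).congr ?_
  filter_upwards [hf.coeFn_toLp, hg.coeFn_toLp] with x hfx hgx
  rw [hfx, hgx]

variable {ι : Type*} [Fintype ι]

variable (μ) in
noncomputable def weightedGram (c : α → ℝ) (f : ι → α → E) : Matrix ι ι ℝ :=
  fun r s => ∫ x, c x * ⟪f s x, f r x⟫ ∂μ

theorem dotProduct_weightedGram_mulVec {c : α → ℝ} {f : ι → α → E}
    (hint : ∀ r s, Integrable (fun x => c x * ⟪f s x, f r x⟫) μ) (z : ι → ℝ) :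
    z ⬝ᵥ (weightedGram μ c f *ᵥ z) = ∫ x, c x * ‖∑ s, z s • f s x‖ ^ 2 ∂μ := by
  have hexpand : ∀ x, c x * ‖∑ s, z s • f s x‖ ^ 2
      = ∑ r, ∑ s, z r * z s * (c x * ⟪f s x, f r x⟫) := by
    intro x
    simp only [← real_inner_self_eq_norm_sq, sum_inner, inner_sum, real_inner_smul_left,
      real_inner_smul_right, Finset.mul_sum]
    exact Finset.sum_congr rfl fun r _ => Finset.sum_congr rfl fun s _ => by ring
  simp_rw [hexpand]
  rw [integral_finsetSum _ fun r _ => integrable_finsetSum _ fun s _ => (hint r s).const_mul _]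
  refine Finset.sum_congr rfl fun r _ => ?_
  rw [integral_finsetSum _ fun s _ => (hint r s).const_mul _, mulVec, dotProduct, Finset.mul_sum]
  refine Finset.sum_congr rfl fun s _ => ?_
  rw [integral_const_mul, weightedGram]
  ring

end WeightedGram

theorem weighted_stiffness_eigenvalue_bounds_general
    (d n : ℕ)
    (Ω : Set (EuclideanSpace ℝ (Fin d)))
    (abar : ℝ)
    (w : EuclideanSpace ℝ (Fin d) → ℝ) (hw : Measurable w)
    (wmin wmax : ℝ)
    (hwbound : ∀ᵐ x ∂(volume.restrict Ω), wmin ≤ w x ∧ w x ≤ wmax)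
    (φ : Fin n → EuclideanSpace ℝ (Fin d) → ℝ)
    (hgrad : ∀ s, MemLp (fun x => gradient (φ s) x) 2 (volume.restrict Ω))
    (K₀ : Matrix (Fin n) (Fin n) ℝ)
    (hK₀ : ∀ r s, K₀ r s =
      ∫ x in Ω, abar * (inner ℝ (gradient (φ s) x) (gradient (φ r) x) : ℝ))
    (K : Matrix (Fin n) (Fin n) ℝ)
    (hK : ∀ r s, K r s =
      ∫ x in Ω, w x * (inner ℝ (gradient (φ s) x) (gradient (φ r) x) : ℝ))
    (hK₀pd : K₀.PosDef)
    (μ : ℝ) (z : Fin n → ℝ) (hz : z ≠ 0)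
    (heig : K *ᵥ z = μ • (K₀ *ᵥ z)) :
    wmin / abar ≤ μ ∧ μ ≤ wmax / abar := by
  set ν := volume.restrict Ω
  set g := fun x => ∑ s, z s • gradient (φ s) x
  have hK₀z : z ⬝ᵥ (K₀ *ᵥ z) = abar * ∫ x, ‖g x‖ ^ 2 ∂ν := by
    rw [show K₀ = weightedGram ν (fun _ => abar) (fun s => gradient (φ s)) from Matrix.ext hK₀,
      dotProduct_weightedGram_mulVec
        (fun r s => ((hgrad s).integrable_inner (hgrad r)).const_mul abar), integral_const_mul]
  have hKz : z ⬝ᵥ (K *ᵥ z) = ∫ x, w x * ‖g x‖ ^ 2 ∂ν := by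
    have hwC : ∀ᵐ x ∂ν, ‖w x‖ ≤ max |wmin| |wmax| :=
      hwbound.mono fun x hx => abs_le_max_abs_abs hx.1 hx.2
    rw [show K = weightedGram ν w (fun s => gradient (φ s)) from Matrix.ext hK,
      dotProduct_weightedGram_mulVec
        (fun r s => ((hgrad s).integrable_inner (hgrad r)).bdd_mul hw.aestronglyMeasurable hwC)]
  have hRayleigh : ∫ x, w x * ‖g x‖ ^ 2 ∂ν = μ * abar * ∫ x, ‖g x‖ ^ 2 ∂ν := by
    rw [← hKz, heig, dotProduct_smul, smul_eq_mul, hK₀z, mul_assoc]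
  obtain ⟨habar, hI⟩ : 0 < abar ∧ 0 < ∫ x, ‖g x‖ ^ 2 ∂ν :=
    (pos_and_pos_or_neg_and_neg_of_mul_pos (hK₀z ▸ hK₀pd.dotProduct_mulVec_pos hz)).resolve_right
      fun h => (integral_nonneg fun x => sq_nonneg _).not_gt h.2
  have hg : MemLp g 2 ν :=
    memLp_finsetSum (f := fun s x => z s • gradient (φ s) x) _ fun s _ => (hgrad s).const_smul (z s)
  obtain ⟨hlow, hhigh⟩ := integral_mul_norm_sq_mem_Icc hw.aestronglyMeasurable hwbound hg
  rw [div_le_iff₀ habar, le_div_iff₀ habar]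
  constructor
  · exact le_of_mul_le_mul_right (hlow.trans_eq hRayleigh) hI
  · exact le_of_mul_le_mul_right (hRayleigh.symm.trans_le hhigh) hI

/-- Eigenvalue bounds for weighted stiffness matrices: if
`K₀(r,s) = ∫_Ω ā ∇φ_s·∇φ_r` and `K(r,s) = ∫_Ω w ∇φ_s·∇φ_r` with
`w_min ≤ w ≤ w_max` a.e. on `Ω`, and `K₀` is positive definite, then every real
eigenvalue `μ` of `K₀⁻¹ K` (i.e. of `K z = μ K₀ z`) satisfies
`w_min/ā ≤ μ ≤ w_max/ā`. -/
theorem weighted_stiffness_eigenvalue_bounds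
    (d n : ℕ) (hn : 0 < n)
    (Ω : Set (EuclideanSpace ℝ (Fin d))) (hΩ : MeasurableSet Ω)
    (abar : ℝ) (habar : 0 < abar)
    (w : EuclideanSpace ℝ (Fin d) → ℝ) (hw : Measurable w)
    (wmin wmax : ℝ)
    (hwbound : ∀ᵐ x ∂(volume.restrict Ω), wmin ≤ w x ∧ w x ≤ wmax)
    (φ : Fin n → EuclideanSpace ℝ (Fin d) → ℝ)
    (hφ : ∀ s, Differentiable ℝ (φ s))
    (hgrad : ∀ s, MemLp (fun x => gradient (φ s) x) 2 (volume.restrict Ω))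
    (K₀ : Matrix (Fin n) (Fin n) ℝ)
    (hK₀ : ∀ r s, K₀ r s =
      ∫ x in Ω, abar * (inner ℝ (gradient (φ s) x) (gradient (φ r) x) : ℝ))
    (K : Matrix (Fin n) (Fin n) ℝ)
    (hK : ∀ r s, K r s =
      ∫ x in Ω, w x * (inner ℝ (gradient (φ s) x) (gradient (φ r) x) : ℝ))
    (hK₀pd : K₀.PosDef)
    (μ : ℝ) (z : Fin n → ℝ) (hz : z ≠ 0)
    (heig : K *ᵥ z = μ • (K₀ *ᵥ z)) :
    wmin / abar ≤ μ ∧ μ ≤ wmax / abar :=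
  weighted_stiffness_eigenvalue_bounds_general d n Ω abar w hw wmin wmax hwbound φ hgrad K₀ hK₀ K hK
    hK₀pd μ z hz heig
end
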